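/- Let ν = ν_{u(·)} be the product Bernoulli measure on X_N with means u ∈ (0,1)^{T_N^d}, and let L_G be the Glauber generator with flip rates c_x(η) = c_x^+(η)(1 − η_x) + c_x^−(η) η_x, where c_x^±(η) = a^± η_{x+n₁} η_{x+n₂} + b^± η_{x+n₁} + c^± ≥ 0 with constants a^±, b^±, c^± ∈ ℝ and distinct sites {n₁, n₂, 0} ⊂ ℤ^d. Then pointwise in η: (L_G^{*,ν} 1)(η) = Σ_{x∈T_N^d} ( c_x^+(η)/u_x − c_x^−(η)/(1−u_x) ) η̄_x, and this equals F(ω,u) + Σ_{x∈T_N^d} f^N(x,u) ω_x, where f^N(x,u) = (1−u_x) c_x^+(u) − u_x c_x^−(u) (with c_x^±(u) obtained by substituting u for η), and F(ω,u) = Σ_x a(u_x,u_{x+n₁},u_{x+n₂}) ω_x ω_{x+n₁} + Σ_x b(u_x,u_{x+n₁},u_{x+n₂}) ω_x ω_{x+n₂} + Σ_x c(u_x,u_{x+n₁},u_{x+n₂}) ω_x ω_{x+n₁} ω_{x+n₂}, with a(u_x,u_{x+n₁},u_{x+n₂}) = χ(u_{x+n₁})[ (a^+(1−u_x) − a^−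 u_x) u_{x+n₂} + b^+(1−u_x) − b^− u_x ], b(u_x,u_{x+n₁},u_{x+n₂}) = χ(u_{x+n₂}) (a^+(1−u_x) − a^− u_x) u_{x+n₁}, and c(u_x,u_{x+n₁},u_{x+n₂}) = χ(u_{x+n₁}) χ(u_{x+n₂}) (a^+(1−u_x) − a^− u_x). -/

import Mathlib

open Finset

/-- The discrete torus `T_N^d = (ℤ/Nℤ)^d`. -/
abbrev Torus (d N : ℕ) := Fin d → ZMod N

/-- The configuration space `X_N = {0,1}^{T_N^d}`. -/
abbrev Config (d N : ℕ) := Torus d N → Bool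

/-- The value in `{0,1} ⊂ ℝ` of an occupation variable. -/
noncomputable def bval : Bool → ℝ := fun b => if b then 1 else 0

/-- `flipC x η = η^x`, the configuration with the value at `x` flipped. -/
def flipC {d N : ℕ} (x : Torus d N) (η : Config d N) : Config d N :=
  Function.update η x (!(η x))

/-- The product Bernoulli measure with means `u`. -/
noncomputable def bern {d N : ℕ} [NeZero N] (u : Torus d N → ℝ) (η : Config d N) : ℝ :=
  ∏ x : Torus d N, (if η x then u x else 1 - u x)

/-- `χ(ρ) = ρ(1-ρ)`. -/
noncomputable def chi (ρ : ℝ) : ℝ := ρ * (1 - ρ)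

/-- The normalized centered occupation variable `ω_x = (η_x - u_x)/χ(u_x)`. -/
noncomputable def omg {d N : ℕ} (u : Torus d N → ℝ) (x : Torus d N) (η : Config d N) : ℝ :=
  (bval (η x) - u x) / chi (u x)

/-- The Glauber generator `L_G f (η) = Σ_x c_x(η) (f(η^x) - f(η))`. -/
noncomputable def glauber {d N : ℕ} [NeZero N] (c : Torus d N → Config d N → ℝ)
    (f : Config d N → ℝ) (η : Config d N) : ℝ :=
  ∑ x : Torus d N, c x η * (f (flipC x η) - f η)

/-- The creation/annihilation rate `c_x^±(η) = a^± η_{x+n₁} η_{x+n₂} + b^± η_{x+n₁} + c^±`. -/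
noncomputable def cRate {d N : ℕ} (a b c : ℝ) (n₁ n₂ : Torus d N)
    (x : Torus d N) (η : Config d N) : ℝ :=
  a * bval (η (x + n₁)) * bval (η (x + n₂)) + b * bval (η (x + n₁)) + c

/-- `c_x^±(u)`, i.e. `c_x^±` with `η` replaced by `u`. -/
noncomputable def cRateU {d N : ℕ} (a b c : ℝ) (n₁ n₂ : Torus d N)
    (u : Torus d N → ℝ) (x : Torus d N) : ℝ :=
  a * u (x + n₁) * u (x + n₂) + b * u (x + n₁) + c

/-- The full flip rate `c_x(η) = c_x^+(η)(1-η_x) + c_x^-(η) η_x`. -/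
noncomputable def flipRate {d N : ℕ} (ap bp cp am bm cm : ℝ) (n₁ n₂ : Torus d N)
    (x : Torus d N) (η : Config d N) : ℝ :=
  cRate ap bp cp n₁ n₂ x η * (1 - bval (η x)) + cRate am bm cm n₁ n₂ x η * bval (η x)

/-- `f^N(x,u) = (1-u_x) c_x^+(u) - u_x c_x^-(u)`. -/
noncomputable def fNterm {d N : ℕ} (ap bp cp am bm cm : ℝ) (n₁ n₂ : Torus d N)
    (u : Torus d N → ℝ) (x : Torus d N) : ℝ :=
  (1 - u x) * cRateU ap bp cp n₁ n₂ u x - u x * cRateU am bm cm n₁ n₂ u x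
/-!
Flipping a site is an involution of the configuration space, so reindexing the sum over `η` by
`η ↦ η^x` moves `L_G` onto the density: `L_G^{*,ν} 1 (η) ν(η) = Σ_x (c_x(η^x) ν(η^x) - c_x(η) ν(η))`.
Because `n₁, n₂ ≠ 0`, the rates `c_x^±` do not see `η_x`, and `ν(η^x)/ν(η)` is `u_x/(1-u_x)` or its
inverse according to `η_x`; this gives the first formula. The second is a polynomial identity at
each site, obtained by substituting `η_y = u_y + χ(u_y) ω_y`.
-/

theorem sum_rate_mul_jump_mul_weight_eq {α ι : Type*} [Fintype α] [Fintype ι]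
    (τ : ι → α → α) (hτ : ∀ i, Function.Involutive (τ i)) (c : ι → α → ℝ) (μ f : α → ℝ) :
    ∑ a, (∑ i, c i a * (f (τ i a) - f a)) * μ a
      = ∑ a, (∑ i, (c i (τ i a) * μ (τ i a) - c i a * μ a)) * f a := by
  have reindex : ∀ i, ∑ a, c i a * μ a * f (τ i a) = ∑ a, c i (τ i a) * μ (τ i a) * f a := fun i =>
    Fintype.sum_equiv ((hτ i).toPerm _) _ _ fun a => by
      simp only [Function.Involutive.coe_toPerm, hτ i a]
  calc ∑ a, (∑ i, c i a * (f (τ i a) - f a)) * μ a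
      = ∑ i, (∑ a, c i a * μ a * f (τ i a) - ∑ a, c i a * μ a * f a) := by
        simp only [sum_mul, ← sum_sub_distrib]
        rw [sum_comm]
        exact sum_congr rfl fun i _ => sum_congr rfl fun a _ => by ring
    _ = ∑ a, (∑ i, (c i (τ i a) * μ (τ i a) - c i a * μ a)) * f a := by
        simp only [reindex, ← sum_sub_distrib, sum_mul, sub_mul]
        exact sum_comm

section Flip

variable {d N : ℕ}

theorem flipC_of_ne (x : Torus d N) (η : Config d N) {y : Torus d N} (h : y ≠ x) :
    flipC x η y = η y :=
  Function.update_of_ne h _ _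

theorem flipC_self (x : Torus d N) (η : Config d N) : flipC x η x = !(η x) :=
  Function.update_self _ _ _

theorem flipC_involutive (x : Torus d N) : Function.Involutive (flipC x) := by
  intro η
  funext y
  by_cases h : y = x
  · subst h; simp [flipC_self]
  · simp [flipC_of_ne _ _ h]

theorem cRate_flipC_self (a b c : ℝ) {n₁ n₂ : Torus d N} (h₁ : n₁ ≠ 0) (h₂ : n₂ ≠ 0)
    (x : Torus d N) (η : Config d N) :
    cRate a b c n₁ n₂ x (flipC x η) = cRate a b c n₁ n₂ x η := by
  simp only [cRate, flipC_of_ne x η (add_ne_left.mpr h₁), flipC_of_ne x η (add_ne_left.mpr h₂)]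

theorem bern_flipC_mul [NeZero N] (u : Torus d N → ℝ) (x : Torus d N) (η : Config d N) :
    bern u (flipC x η) * (if η x then u x else 1 - u x)
      = bern u η * (if η x then 1 - u x else u x) := by
  have rest : ∏ y ∈ univ.erase x, (if flipC x η y then u y else 1 - u y)
      = ∏ y ∈ univ.erase x, (if η y then u y else 1 - u y) :=
    prod_congr rfl fun y hy => by rw [flipC_of_ne x η (mem_erase.mp hy).1]
  simp only [bern, ← mul_prod_erase univ _ (mem_univ x), rest, flipC_self]
  cases η x <;> simp only [Bool.not_false, Bool.not_true, Bool.false_eq_true, if_true, if_false]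
    <;> ring

end Flip

theorem flipRate_mul_bern_flipC_sub {d N : ℕ} [NeZero N] (ap bp cp am bm cm : ℝ) {n₁ n₂ : Torus d N}
    (h₁ : n₁ ≠ 0) (h₂ : n₂ ≠ 0) (u : Torus d N → ℝ) (hu : ∀ x, u x ∈ Set.Ioo (0:ℝ) 1)
    (x : Torus d N) (η : Config d N) :
    flipRate ap bp cp am bm cm n₁ n₂ x (flipC x η) * bern u (flipC x η)
      - flipRate ap bp cp am bm cm n₁ n₂ x η * bern u η
    = (cRate ap bp cp n₁ n₂ x η / u x - cRate am bm cm n₁ n₂ x η / (1 - u x))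
        * (bval (η x) - u x) * bern u η := by
  have hu₀ : u x ≠ 0 := (hu x).1.ne'
  have hu₁ : 1 - u x ≠ 0 := sub_ne_zero.mpr (hu x).2.ne'
  have hbern := bern_flipC_mul u x η
  simp only [flipRate, cRate_flipC_self _ _ _ h₁ h₂, flipC_self]
  cases hx : η x <;> simp only [hx, Bool.not_false, Bool.not_true, Bool.false_eq_true, if_true,
    if_false, bval] at hbern ⊢
  · rw [eq_div_of_mul_eq hu₁ hbern]; field_simp; ring
  · rw [eq_div_of_mul_eq hu₀ hbern]; field_simp; ring

theorem cRate_div_sub_mul_centered_eq {d N : ℕ} (ap bp cp am bm cm : ℝ) (n₁ n₂ : Torus d N)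
    (u : Torus d N → ℝ) (hu : ∀ x, u x ∈ Set.Ioo (0:ℝ) 1) (x : Torus d N) (η : Config d N) :
    (cRate ap bp cp n₁ n₂ x η / u x - cRate am bm cm n₁ n₂ x η / (1 - u x))
        * (bval (η x) - u x)
    = chi (u (x + n₁)) * ((ap * (1 - u x) - am * u x) * u (x + n₂)
          + bp * (1 - u x) - bm * u x) * omg u x η * omg u (x + n₁) η
      + chi (u (x + n₂)) * (ap * (1 - u x) - am * u x) * u (x + n₁)
          * omg u x η * omg u (x + n₂) η
      + chi (u (x + n₁)) * chi (u (x + n₂)) * (ap * (1 - u x) - am * u x)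
          * omg u x η * omg u (x + n₁) η * omg u (x + n₂) η
      + fNterm ap bp cp am bm cm n₁ n₂ u x * omg u x η := by
  have hu₀ : ∀ y, u y ≠ 0 := fun y => (hu y).1.ne'
  have hu₁ : ∀ y, 1 - u y ≠ 0 := fun y => sub_ne_zero.mpr (hu y).2.ne'
  simp only [cRate, cRateU, fNterm, omg, chi]
  field_simp [hu₀ x, hu₁ x, hu₀ (x + n₁), hu₁ (x + n₁), hu₀ (x + n₂), hu₁ (x + n₂)]
  ring

/-- `L_G^{*,ν} 1` is characterised in weak form, against arbitrary test functions `f`. -/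
theorem glauber_adjoint_one_general (d N : ℕ) [NeZero N]
    (ap bp cp am bm cm : ℝ) (n₁ n₂ : Torus d N)
    (hn1 : n₁ ≠ 0) (hn2 : n₂ ≠ 0)
    (u : Torus d N → ℝ) (hu : ∀ x, u x ∈ Set.Ioo (0:ℝ) 1) :
    (∀ f : Config d N → ℝ,
      ∑ η : Config d N, glauber (flipRate ap bp cp am bm cm n₁ n₂) f η * bern u η
        = ∑ η : Config d N,
            (∑ x : Torus d N,
              (cRate ap bp cp n₁ n₂ x η / u x - cRate am bm cm n₁ n₂ x η / (1 - u x))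
                * (bval (η x) - u x))
            * f η * bern u η)
    ∧ (∀ η : Config d N,
        (∑ x : Torus d N,
          (cRate ap bp cp n₁ n₂ x η / u x - cRate am bm cm n₁ n₂ x η / (1 - u x))
            * (bval (η x) - u x))
        = (∑ x : Torus d N,
            chi (u (x + n₁)) * ((ap * (1 - u x) - am * u x) * u (x + n₂)
              + bp * (1 - u x) - bm * u x) * omg u x η * omg u (x + n₁) η)
          + (∑ x : Torus d N,
              chi (u (x + n₂)) * (ap * (1 - u x) - am * u x) * u (x + n₁)
                * omg u x η * omg u (x + n₂) η)
          + (∑ x : Torus d N,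
              chi (u (x + n₁)) * chi (u (x + n₂)) * (ap * (1 - u x) - am * u x)
                * omg u x η * omg u (x + n₁) η * omg u (x + n₂) η)
          + ∑ x : Torus d N, fNterm ap bp cp am bm cm n₁ n₂ u x * omg u x η) := by
  refine ⟨fun f => ?_, fun η => ?_⟩
  · simp only [glauber, sum_rate_mul_jump_mul_weight_eq _ flipC_involutive,
      flipRate_mul_bern_flipC_sub ap bp cp am bm cm hn1 hn2 u hu, ← sum_mul]
    exact sum_congr rfl fun η _ => by ring
  · simp only [← sum_add_distrib]
    exact sum_congr rfl fun x _ => cRate_div_sub_mul_centered_eq ap bp cp am bm cm n₁ n₂ u hu x η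

/-- Lemma 2.5: for the Glauber dynamics with rates of the product form,
`L_G^{*,ν} 1 (η) = Σ_x ( c_x^+(η)/u_x - c_x^-(η)/(1-u_x) ) η̄_x`
(stated in its equivalent weak form against arbitrary test functions `f`), and this quantity
equals `F(ω,u) + Σ_x f^N(x,u) ω_x` pointwise, with the explicit quadratic/cubic terms
`a`, `b`, `c` of the paper. -/
theorem glauber_adjoint_one (d N : ℕ) [NeZero N] (hd : 1 ≤ d)
    (ap bp cp am bm cm : ℝ) (n₁ n₂ : Torus d N)
    (hn12 : n₁ ≠ n₂) (hn1 : n₁ ≠ 0) (hn2 : n₂ ≠ 0)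
    (hratep : ∀ (x : Torus d N) (η : Config d N), 0 ≤ cRate ap bp cp n₁ n₂ x η)
    (hratem : ∀ (x : Torus d N) (η : Config d N), 0 ≤ cRate am bm cm n₁ n₂ x η)
    (u : Torus d N → ℝ) (hu : ∀ x, u x ∈ Set.Ioo (0:ℝ) 1) :
    (∀ f : Config d N → ℝ,
      ∑ η : Config d N, glauber (flipRate ap bp cp am bm cm n₁ n₂) f η * bern u η
        = ∑ η : Config d N,
            (∑ x : Torus d N,
              (cRate ap bp cp n₁ n₂ x η / u x - cRate am bm cm n₁ n₂ x η / (1 - u x))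
                * (bval (η x) - u x))
            * f η * bern u η)
    ∧ (∀ η : Config d N,
        (∑ x : Torus d N,
          (cRate ap bp cp n₁ n₂ x η / u x - cRate am bm cm n₁ n₂ x η / (1 - u x))
            * (bval (η x) - u x))
        = (∑ x : Torus d N,
            chi (u (x + n₁)) * ((ap * (1 - u x) - am * u x) * u (x + n₂)
              + bp * (1 - u x) - bm * u x) * omg u x η * omg u (x + n₁) η)
          + (∑ x : Torus d N,
              chi (u (x + n₂)) * (ap * (1 - u x) - am * u x) * u (x + n₁)
                * omg u x η * omg u (x + n₂) η)
          + (∑ x : Torus d N,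
              chi (u (x + n₁)) * chi (u (x + n₂)) * (ap * (1 - u x) - am * u x)
                * omg u x η * omg u (x + n₁) η * omg u (x + n₂) η)
          + ∑ x : Torus d N, fNterm ap bp cp am bm cm n₁ n₂ u x * omg u x η) :=
  glauber_adjoint_one_general d N ap bp cp am bm cm n₁ n₂ hn1 hn2 u hu
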